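/- arXiv:2105.11889 — 2 statements merged into one kernel-verified Lean document; each statement's English description precedes it below -/
import Mathlib

section
/- Let H be a d-sparse N×N Hermitian matrix with ‖H‖_max ≤ 1, and for each j ∈ [N] define the subnormalized vectors |Φ_j⟩ = (1/√d) ∑_{(j,k)∈𝖧} |j⟩ ⊗ √(H_{jk}*) |k⟩ and |Φ_j^⊥⟩ = (1/√d) ∑_{(j,k)∈𝖧} |j⟩ ⊗ √(1 − |H_{jk}|) |k + N⟩ in ℂ^{2N} ⊗ ℂ^{2N}. Let S be the swap operator S|a,b⟩ = |b,a⟩. Then for all j, l ∈ [N]: (1) ⟨Φ_j| S |Φ_l⟩ = H_{jl}/d; (2) ⟨Φ_j| S |Φ_l^⊥⟩ = ⟨Φ_j^⊥| S |Φ_l⟩ = ⟨Φ_j^⊥| S |Φ_l^⊥⟩ = 0. -/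
open Finset
open scoped Classical

noncomputable section

/-- Embedding of `[N]` into the first half of `[2N]`. -/
def embA {N : ℕ} (k : Fin N) : Fin (2 * N) := ⟨k, by have := k.isLt; omega⟩

/-- Embedding `k ↦ k + N` of `[N]` into the second half of `[2N]`. -/
def embB {N : ℕ} (k : Fin N) : Fin (2 * N) := ⟨(k : ℕ) + N, by have := k.isLt; omega⟩

/-- The "good" subnormalized state
`|Φ_j⟩ = (1/√d) ∑_{(j,k)∈𝖧} |j⟩ ⊗ √(H_{jk}*)|k⟩` in `ℂ^{2N} ⊗ ℂ^{2N}`,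
where `sq z` denotes the chosen square root of `z`. -/
def PhiGood {N : ℕ} (d : ℕ) (H : Matrix (Fin N) (Fin N) ℂ) (sq : ℂ → ℂ) (j : Fin N) :
    Fin (2 * N) × Fin (2 * N) → ℂ := fun p =>
  ((Real.sqrt d : ℂ))⁻¹ * ∑ k : Fin N,
    if H j k ≠ 0 ∧ p = (embA j, embA k) then sq ((starRingEnd ℂ) (H j k)) else 0

/-- The "garbage" subnormalized state
`|Φ_j^⊥⟩ = (1/√d) ∑_{(j,k)∈𝖧} |j⟩ ⊗ √(1−|H_{jk}|)|k+N⟩`. -/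
def PhiPerp {N : ℕ} (d : ℕ) (H : Matrix (Fin N) (Fin N) ℂ) (j : Fin N) :
    Fin (2 * N) × Fin (2 * N) → ℂ := fun p =>
  ((Real.sqrt d : ℂ))⁻¹ * ∑ k : Fin N,
    if H j k ≠ 0 ∧ p = (embA j, embB k) then
      (Real.sqrt (1 - ‖H j k‖) : ℂ) else 0

/-- The swap operator `S|a,b⟩ = |b,a⟩` acting on vectors of `ℂ^{2N} ⊗ ℂ^{2N}`. -/
def swapOp {N : ℕ} (φ : Fin (2 * N) × Fin (2 * N) → ℂ) :
    Fin (2 * N) × Fin (2 * N) → ℂ := fun p => φ (p.2, p.1)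

/-- The inner product `⟨φ|ψ⟩ = ∑_p φ(p)* ψ(p)`. -/
def inner2 {N : ℕ} (φ ψ : Fin (2 * N) × Fin (2 * N) → ℂ) : ℂ :=
  ∑ p : Fin (2 * N) × Fin (2 * N), (starRingEnd ℂ) (φ p) * ψ p

lemma key_sum {α : Type*} [Fintype α] [DecidableEq α] (P Q : Prop) [Decidable P] [Decidable Q]
    (a b : α) (x y : ℂ) :
    (∑ p : α, (if P ∧ p = a then x else 0) * (if Q ∧ p = b then y else 0))
      = if P ∧ Q ∧ a = b then x * y else 0 := by
  have h : ∀ p : α, (if P ∧ p = a then x else 0) * (if Q ∧ p = b then y else 0)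
      = if p = a then (if P ∧ Q ∧ a = b then x * y else 0) else 0 := by
    intro p
    by_cases hp : p = a
    · subst hp
      by_cases hP : P <;> by_cases hQ : Q <;> by_cases hab : p = b <;> simp [hP, hQ, hab]
    · simp [hp]
  simp [h]

lemma ite_irrel {α : Sort*} {p : Prop} (i1 i2 : Decidable p) (a b : α) :
    @ite _ p i1 a b = @ite _ p i2 a b := by
  cases Subsingleton.elim i1 i2; rfl

lemma inner_collapse {N : ℕ} (c : ℂ) (P Q : Fin N → Prop)
    (a b : Fin N → Fin (2*N) × Fin (2*N)) (x y : Fin N → ℂ)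
    (F G : Fin (2*N) × Fin (2*N) → ℂ)
    (hF : ∀ p, F p = c * ∑ k, if P k ∧ p = a k then x k else 0)
    (hG : ∀ p, G p = c * ∑ k, if Q k ∧ p = b k then y k else 0) :
    inner2 F (swapOp G)
      = (starRingEnd ℂ) c * c *
        ∑ k, ∑ k', if P k ∧ Q k' ∧ a k = ((b k').2, (b k').1)
          then (starRingEnd ℂ) (x k) * y k' else 0 := by
  have hswap : ∀ (p q : Fin (2*N) × Fin (2*N)), ((p.2, p.1) = q) ↔ (p = (q.2, q.1)) := by
    intro p q
    constructor <;> intro h <;>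
      · have h1 := congrArg Prod.fst h
        have h2 := congrArg Prod.snd h
        simp at h1 h2
        ext <;> simp [h1, h2]
  simp only [inner2, swapOp, hF, hG, map_mul, map_sum, apply_ite (starRingEnd ℂ), map_zero]
  simp only [hswap]
  simp only [mul_mul_mul_comm, Finset.sum_mul_sum]
  rw [← Finset.mul_sum, Finset.sum_comm]
  congr 1
  refine Finset.sum_congr rfl fun k _ => ?_
  rw [Finset.sum_comm]
  refine Finset.sum_congr rfl fun k' _ => ?_
  exact key_sum (P k) (Q k') (a k) ((b k').2, (b k').1) ((starRingEnd ℂ) (x k)) (y k')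

lemma embA_inj {N : ℕ} {x y : Fin N} : embA x = embA y ↔ x = y := by
  simp [embA, Fin.ext_iff]

lemma embA_ne_embB {N : ℕ} (x y : Fin N) : embA x ≠ embB y := by
  simp only [embA, embB, ne_eq, Fin.ext_iff]
  have := x.isLt
  omega

lemma embB_ne_embA {N : ℕ} (x y : Fin N) : embB x ≠ embA y := by
  exact (embA_ne_embB y x).symm

/-- Orthogonality relations for the quantum-walk states: for a `d`-sparse Hermitian `H`
with `‖H‖_max ≤ 1` and a root function `sq` with `sq(z*)·(sq z)* = z*` at every entry
`z = H_{jk}` (such an `sq` exists exactly when no entry of `H` is a negative real; the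
principal square root then serves),
(1) `⟨Φ_j|S|Φ_l⟩ = H_{jl}/d`; (2) `⟨Φ_j|S|Φ_l^⊥⟩ = ⟨Φ_j^⊥|S|Φ_l⟩ = ⟨Φ_j^⊥|S|Φ_l^⊥⟩ = 0`. -/
theorem walk_states_orthogonality (N d : ℕ) (hN : 0 < N) (hd : 0 < d)
    (H : Matrix (Fin N) (Fin N) ℂ) (hH : H.IsHermitian)
    (hmax : ∀ j k, ‖H j k‖ ≤ 1)
    (hsparse : ∀ j, (univ.filter (fun k => H j k ≠ 0)).card ≤ d)
    (sq : ℂ → ℂ)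
    (hsq : ∀ j k : Fin N, sq ((starRingEnd ℂ) (H j k)) * (starRingEnd ℂ) (sq (H j k)) =
      (starRingEnd ℂ) (H j k))
    (j l : Fin N) :
    inner2 (PhiGood d H sq j) (swapOp (PhiGood d H sq l)) = H j l / (d : ℂ) ∧
    inner2 (PhiGood d H sq j) (swapOp (PhiPerp d H l)) = 0 ∧
    inner2 (PhiPerp d H j) (swapOp (PhiGood d H sq l)) = 0 ∧
    inner2 (PhiPerp d H j) (swapOp (PhiPerp d H l)) = 0 := by
  have hcc : (starRingEnd ℂ) ((Real.sqrt d : ℂ))⁻¹ * ((Real.sqrt d : ℂ))⁻¹ = ((d : ℕ) : ℂ)⁻¹ := by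
    rw [map_inv₀, Complex.conj_ofReal, ← mul_inv]
    congr 1
    rw [← Complex.ofReal_mul, Real.mul_self_sqrt (by positivity)]
    norm_cast
  have hlj : H l j = (starRingEnd ℂ) (H j l) := by
    have h1 := congrFun (congrFun hH l) j
    simpa [Matrix.conjTranspose_apply] using h1.symm
  refine ⟨?_, ?_, ?_, ?_⟩
  · have e1 := inner_collapse ((Real.sqrt d : ℂ))⁻¹
      (fun k => H j k ≠ 0) (fun k => H l k ≠ 0)
      (fun k => (embA j, embA k)) (fun k => (embA l, embA k))
      (fun k => sq ((starRingEnd ℂ) (H j k))) (fun k => sq ((starRingEnd ℂ) (H l k)))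
      (PhiGood d H sq j) (PhiGood d H sq l)
      (by intro p
          simp only [PhiGood]; congr 1; exact Finset.sum_congr rfl fun k _ => ite_irrel _ _ _ _)
      (by intro p
          simp only [PhiGood]; congr 1; exact Finset.sum_congr rfl fun k _ => ite_irrel _ _ _ _)
    rw [e1, hcc]
    simp only [Prod.mk.injEq, embA_inj]
    rw [Finset.sum_eq_single l (fun k _ hk => Finset.sum_eq_zero fun k' _ => by
        simp [hk]) (by simp)]
    rw [Finset.sum_eq_single j (fun k' _ hk' => by simp [Ne.symm hk']) (by simp)]
    by_cases hjl : H j l = 0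
    · simp [hjl, hlj]
    · have hljne : H l j ≠ 0 := by
        rw [hlj]; simpa using hjl
      rw [if_pos ⟨hjl, hljne, rfl, rfl⟩]
      have hval : (starRingEnd ℂ) (sq ((starRingEnd ℂ) (H j l))) * sq ((starRingEnd ℂ) (H l j))
          = H j l := by
        calc (starRingEnd ℂ) (sq ((starRingEnd ℂ) (H j l))) * sq ((starRingEnd ℂ) (H l j))
            = (starRingEnd ℂ) (sq (H l j)) * sq ((starRingEnd ℂ) (H l j)) := by rw [← hlj]
          _ = sq ((starRingEnd ℂ) (H l j)) * (starRingEnd ℂ) (sq (H l j)) := mul_comm _ _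
          _ = (starRingEnd ℂ) (H l j) := hsq l j
          _ = H j l := by rw [hlj]; simp
      rw [hval, div_eq_mul_inv, mul_comm]
  · have e2 := inner_collapse ((Real.sqrt d : ℂ))⁻¹
      (fun k => H j k ≠ 0) (fun k => H l k ≠ 0)
      (fun k => (embA j, embA k)) (fun k => (embA l, embB k))
      (fun k => sq ((starRingEnd ℂ) (H j k)))
      (fun k => ((Real.sqrt (1 - ‖H l k‖) : ℝ) : ℂ))
      (PhiGood d H sq j) (PhiPerp d H l)
      (by intro p
          simp only [PhiGood]; congr 1; exact Finset.sum_congr rfl fun k _ => ite_irrel _ _ _ _)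
      (by intro p
          simp only [PhiPerp]; congr 1; exact Finset.sum_congr rfl fun k _ => ite_irrel _ _ _ _)
    rw [e2]
    have : ∀ (k k' : Fin N), ((embA j, embA k) = ((embA l, embB k').2, (embA l, embB k').1))
        ↔ False := by
      intro k k'
      simp [Prod.ext_iff, embA_ne_embB]
    simp [this]
  · have e3 := inner_collapse ((Real.sqrt d : ℂ))⁻¹
      (fun k => H j k ≠ 0) (fun k => H l k ≠ 0)
      (fun k => (embA j, embB k)) (fun k => (embA l, embA k))
      (fun k => ((Real.sqrt (1 - ‖H j k‖) : ℝ) : ℂ))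
      (fun k => sq ((starRingEnd ℂ) (H l k)))
      (PhiPerp d H j) (PhiGood d H sq l)
      (by intro p
          simp only [PhiPerp]; congr 1; exact Finset.sum_congr rfl fun k _ => ite_irrel _ _ _ _)
      (by intro p
          simp only [PhiGood]; congr 1; exact Finset.sum_congr rfl fun k _ => ite_irrel _ _ _ _)
    rw [e3]
    have : ∀ (k k' : Fin N), ((embA j, embB k) = ((embA l, embA k').2, (embA l, embA k').1))
        ↔ False := by
      intro k k'
      simp [Prod.ext_iff, embB_ne_embA]
    simp [this]
  · have e4 := inner_collapse ((Real.sqrt d : ℂ))⁻¹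
      (fun k => H j k ≠ 0) (fun k => H l k ≠ 0)
      (fun k => (embA j, embB k)) (fun k => (embA l, embB k))
      (fun k => ((Real.sqrt (1 - ‖H j k‖) : ℝ) : ℂ))
      (fun k => ((Real.sqrt (1 - ‖H l k‖) : ℝ) : ℂ))
      (PhiPerp d H j) (PhiPerp d H l)
      (by intro p
          simp only [PhiPerp]; congr 1; exact Finset.sum_congr rfl fun k _ => ite_irrel _ _ _ _)
      (by intro p
          simp only [PhiPerp]; congr 1; exact Finset.sum_congr rfl fun k _ => ite_irrel _ _ _ _)
    rw [e4]
    have : ∀ (k k' : Fin N), ((embA j, embB k) = ((embA l, embB k').2, (embA l, embB k').1))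
        ↔ False := by
      intro k k'
      simp [Prod.ext_iff, embA_ne_embB]
    simp [this]

end
end

section
/- Let H be a d-sparse N×N Hermitian matrix, r ∈ ℕ, and for a path j = (j₀,…,j_r) write j ∈ 𝖧^r if each (j_s, j_{s+1}) is an edge of the graph of H. Define the subnormalized vector |Φ_{j₀}^{(r)}⟩ = (1/√(d^r)) ∑_{j ∈ 𝖧^r, first coordinate j₀} |j⟩ ⊗ √(H*_{j₀j₁} ⋯ H*_{j_{r−1}j_r}) |j⟩. Let S^{(r)} be the reverse-order operator S^{(r)}|a₀,…,a_{2r+1}⟩ = |a_{2r+1},…,a₀⟩. Then ⟨Φ_j^{(r)}| S^{(r)} |Φ_k^{(r)}⟩ = ((H/d)^r)_{jk} for all j, k ∈ [N]. -/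
open Finset
open scoped Classical

noncomputable section

/-- The "good" subnormalized state of the `r`-parallel quantum walk:
`|Φ_{j₀}^{(r)}⟩ = (1/√(d^r)) ∑_{paths j ∈ 𝖧^r from j₀} |j⟩ ⊗ √(H*_{j₀j₁}⋯H*_{j_{r−1}j_r}) |j⟩`
as a vector of `(ℂ^{2N})^{⊗(r+1)} ⊗ (ℂ^{2N})^{⊗(r+1)}`, where `sq z` is the chosen
square root of `z`. -/
def PhiPar {N : ℕ} (d r : ℕ) (H : Matrix (Fin N) (Fin N) ℂ) (sq : ℂ → ℂ) (j0 : Fin N) :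
    (Fin (r + 1) → Fin (2 * N)) × (Fin (r + 1) → Fin (2 * N)) → ℂ := fun p =>
  ((Real.sqrt (d ^ r) : ℂ))⁻¹ * ∑ c : Fin (r + 1) → Fin N,
    if c 0 = j0 ∧ (∀ s : Fin r, H (c s.castSucc) (c s.succ) ≠ 0) ∧
        p.1 = embA ∘ c ∧ p.2 = embA ∘ c then
      sq ((starRingEnd ℂ) (∏ s : Fin r, H (c s.castSucc) (c s.succ)))
    else 0

/-- The reverse-order operator `S^{(r)}|a₀,…,a_{2r+1}⟩ = |a_{2r+1},…,a₀⟩` acting on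
vectors of `(ℂ^{2N})^{⊗(2r+2)}`. -/
def revOp {N r : ℕ}
    (φ : (Fin (r + 1) → Fin (2 * N)) × (Fin (r + 1) → Fin (2 * N)) → ℂ) :
    (Fin (r + 1) → Fin (2 * N)) × (Fin (r + 1) → Fin (2 * N)) → ℂ := fun p =>
  φ (fun i => p.2 i.rev, fun i => p.1 i.rev)

/-- The inner product `⟨φ|ψ⟩ = ∑_p φ(p)* ψ(p)`. -/
def innerPar {N r : ℕ}
    (φ ψ : (Fin (r + 1) → Fin (2 * N)) × (Fin (r + 1) → Fin (2 * N)) → ℂ) : ℂ :=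
  ∑ p, (starRingEnd ℂ) (φ p) * ψ p

lemma pow_entry {N : ℕ} (M : Matrix (Fin N) (Fin N) ℂ) (r : ℕ) (j k : Fin N) :
    (M ^ r) j k = ∑ c : Fin (r + 1) → Fin N,
      if c 0 = j ∧ c (Fin.last r) = k then ∏ s : Fin r, M (c s.castSucc) (c s.succ) else 0 := by
  induction r generalizing j with
  | zero =>
      simp only [pow_zero, Matrix.one_apply]
      rw [← Equiv.sum_comp (Equiv.funUnique (Fin 1) (Fin N)).symm
        (fun c : Fin (0+1) → Fin N => if c 0 = j ∧ c (Fin.last 0) = k then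
          ∏ s : Fin 0, M (c s.castSucc) (c s.succ) else 0)]
      simp [ite_and, Finset.sum_ite_eq']
  | succ r ih =>
      rw [pow_succ', Matrix.mul_apply]
      rw [← Equiv.sum_comp (Fin.consEquiv (fun _ : Fin (r + 2) => Fin N))
        (fun c : Fin (r+2) → Fin N => if c 0 = j ∧ c (Fin.last (r+1)) = k then
          ∏ s : Fin (r+1), M (c s.castSucc) (c s.succ) else 0)]
      rw [Fintype.sum_prod_type]
      simp only [Fin.consEquiv_apply]
      have key : ∀ (a : Fin N) (c' : Fin (r+1) → Fin N),
          (if (Fin.cons a c' : Fin (r+2) → Fin N) 0 = j ∧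
              (Fin.cons a c' : Fin (r+2) → Fin N) (Fin.last (r+1)) = k then
            ∏ s : Fin (r+1), M ((Fin.cons a c' : Fin (r+2) → Fin N) s.castSucc)
              ((Fin.cons a c' : Fin (r+2) → Fin N) s.succ) else 0)
          = if a = j then (if c' (Fin.last r) = k then
              M a (c' 0) * ∏ s : Fin r, M (c' s.castSucc) (c' s.succ) else 0) else 0 := by
        intro a c'
        have h1 : (Fin.cons a c' : Fin (r+2) → Fin N) (Fin.last (r+1)) = c' (Fin.last r) := by
          rw [← Fin.succ_last, Fin.cons_succ]
        have h2 : ∏ s : Fin (r+1), M ((Fin.cons a c' : Fin (r+2) → Fin N) s.castSucc)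
              ((Fin.cons a c' : Fin (r+2) → Fin N) s.succ)
            = M a (c' 0) * ∏ s : Fin r, M (c' s.castSucc) (c' s.succ) := by
          rw [Fin.prod_univ_succ]
          refine congrArg₂ _ (by simp) (Finset.prod_congr rfl fun s _ => ?_)
          rw [← Fin.succ_castSucc, Fin.cons_succ, Fin.cons_succ]
        rw [h1, h2]
        simp only [Fin.cons_zero]
        by_cases ha : a = j <;> by_cases hc : c' (Fin.last r) = k <;> simp [ha, hc]
      simp only [key]
      have pull : ∀ a : Fin N, (∑ c' : Fin (r+1) → Fin N, if a = j then
            (if c' (Fin.last r) = k then M a (c' 0) * ∏ s : Fin r, M (c' s.castSucc) (c' s.succ)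
              else 0) else 0)
          = if a = j then (∑ c' : Fin (r+1) → Fin N, if c' (Fin.last r) = k then
              M a (c' 0) * ∏ s : Fin r, M (c' s.castSucc) (c' s.succ) else 0) else 0 := by
        intro a; split <;> simp
      simp only [pull, Finset.sum_ite_eq', Finset.mem_univ, if_true]
      simp only [ih, Finset.mul_sum, mul_ite, mul_zero]
      rw [Finset.sum_comm]
      refine Finset.sum_congr rfl fun c' _ => ?_
      simp only [ite_and]
      rw [Finset.sum_ite_eq]
      simp

/-- The key identity of the parallel quantum walk:
`⟨Φ_j^{(r)}| S^{(r)} |Φ_k^{(r)}⟩ = ((H/d)^r)_{jk}` for a `d`-sparse Hermitian `H` with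
`‖H‖_max ≤ 1` and a root function `sq` with `sq(z*)·(sq z)* = z*` at every product
`z = H_{c₀c₁}⋯H_{c_{r−1}c_r}` along a sequence `c₀,…,c_r` (such an `sq` exists exactly when no
such product is a negative real; the principal square root then serves). -/
theorem parallel_walk_inner (N d r : ℕ) (hN : 0 < N) (hd : 0 < d)
    (H : Matrix (Fin N) (Fin N) ℂ) (hH : H.IsHermitian)
    (hmax : ∀ j k, ‖H j k‖ ≤ 1)
    (hsparse : ∀ j, (univ.filter (fun k => H j k ≠ 0)).card ≤ d)
    (sq : ℂ → ℂ)
    (hsq : ∀ c : Fin (r + 1) → Fin N,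
      sq ((starRingEnd ℂ) (∏ s : Fin r, H (c s.castSucc) (c s.succ))) *
          (starRingEnd ℂ) (sq (∏ s : Fin r, H (c s.castSucc) (c s.succ))) =
        (starRingEnd ℂ) (∏ s : Fin r, H (c s.castSucc) (c s.succ)))
    (j k : Fin N) :
    innerPar (PhiPar d r H sq j) (revOp (PhiPar d r H sq k)) =
      (((d : ℂ)⁻¹ • H) ^ r) j k := by
  classical
  set C : ℂ := ((Real.sqrt (d ^ r) : ℂ))⁻¹ with hC
  have hCconj : (starRingEnd ℂ) C = C := by
    rw [hC, map_inv₀, Complex.conj_ofReal]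
  set F := Fin (r + 1) → Fin N with hF
  set v : (Fin (r+1) → Fin N) → ℂ :=
    fun c => ∏ s : Fin r, H (c s.castSucc) (c s.succ) with hv
  set E : (Fin (r+1) → Fin N) → Prop :=
    fun c => ∀ s : Fin r, H (c s.castSucc) (c s.succ) ≠ 0 with hE
  have hembA : Function.Injective (embA (N := N)) := fun a b h => by
    simpa [embA, Fin.ext_iff] using h
  have hz : ∀ c : Fin (r+1) → Fin N,
      (starRingEnd ℂ) (sq ((starRingEnd ℂ) (v c))) * sq (v c) = v c := by
    intro c
    have h := congrArg (starRingEnd ℂ) (hsq c)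
    rwa [map_mul, starRingEnd_self_apply, starRingEnd_self_apply] at h
  -- reversal facts
  have hrevProd : ∀ c : Fin (r+1) → Fin N,
      v (fun i => c i.rev) = (starRingEnd ℂ) (v c) := by
    intro c
    rw [hv]
    simp only
    rw [map_prod]
    rw [← Equiv.prod_comp (Fin.revPerm (n := r))
      (fun s : Fin r => (starRingEnd ℂ) (H (c s.castSucc) (c s.succ)))]
    refine Finset.prod_congr rfl fun s _ => ?_
    simp only [Fin.revPerm_apply, Fin.rev_castSucc, Fin.rev_succ]
    exact (hH.apply _ _).symm
  have hrevE : ∀ c : Fin (r+1) → Fin N, E (fun i => c i.rev) ↔ E c := by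
    intro c
    rw [hE]
    simp only
    constructor
    · intro h s
      have := h s.rev
      simp only [Fin.rev_castSucc, Fin.rev_succ, Fin.rev_rev] at this
      intro hz
      apply this
      rw [← hH.apply]
      simp [hz]
    · intro h s
      simp only [Fin.rev_castSucc, Fin.rev_succ]
      have := h s.rev
      intro hz
      apply this
      rw [← hH.apply]
      simp [hz]
  -- the inner sum over p for fixed c, c'
  have hkey : ∀ c c' : Fin (r+1) → Fin N,
      (∑ p : (Fin (r + 1) → Fin (2 * N)) × (Fin (r + 1) → Fin (2 * N)),
        (if c 0 = j ∧ E c ∧ p.1 = embA ∘ c ∧ p.2 = embA ∘ c then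
            (starRingEnd ℂ) (sq ((starRingEnd ℂ) (v c))) else 0) *
        (if c' 0 = k ∧ E c' ∧ (fun i => p.2 i.rev) = embA ∘ c' ∧
            (fun i => p.1 i.rev) = embA ∘ c' then sq ((starRingEnd ℂ) (v c')) else 0))
      = if c 0 = j ∧ E c ∧ c' 0 = k ∧ E c' ∧ c' = (fun i => c i.rev) then
          (starRingEnd ℂ) (sq ((starRingEnd ℂ) (v c))) * sq ((starRingEnd ℂ) (v c')) else 0 := by
    intro c c'
    rw [Finset.sum_eq_single ((embA ∘ c, embA ∘ c) :
        (Fin (r + 1) → Fin (2 * N)) × (Fin (r + 1) → Fin (2 * N)))]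
    · have hcc : (fun i : Fin (r+1) => (embA ∘ c) i.rev) = embA ∘ c' ↔
          c' = (fun i => c i.rev) := by
        constructor
        · intro h
          funext i
          have := congrFun h i
          exact (hembA this).symm
        · intro h; funext i; simp [h]
      by_cases h1 : c 0 = j ∧ E c
      · by_cases h2 : c' 0 = k ∧ E c' ∧ c' = (fun i => c i.rev)
        · rw [if_pos ⟨h1.1, h1.2, rfl, rfl⟩, if_pos ⟨h2.1, h2.2.1, hcc.mpr h2.2.2,
            hcc.mpr h2.2.2⟩, if_pos ⟨h1.1, h1.2, h2.1, h2.2.1, h2.2.2⟩]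
        · have hb : ¬(c' 0 = k ∧ E c' ∧
              (fun i : Fin (r+1) => ((embA ∘ c, embA ∘ c) :
                (Fin (r + 1) → Fin (2 * N)) × (Fin (r + 1) → Fin (2 * N))).2 i.rev) = embA ∘ c' ∧
              (fun i : Fin (r+1) => ((embA ∘ c, embA ∘ c) :
                (Fin (r + 1) → Fin (2 * N)) × (Fin (r + 1) → Fin (2 * N))).1 i.rev) = embA ∘ c') := by
            intro hh
            exact h2 ⟨hh.1, hh.2.1, hcc.mp hh.2.2.1⟩
          rw [if_neg hb, mul_zero, if_neg]
          intro hh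
          exact h2 ⟨hh.2.2.1, hh.2.2.2.1, hh.2.2.2.2⟩
      · rw [if_neg, zero_mul, if_neg]
        · intro hh; exact h1 ⟨hh.1, hh.2.1⟩
        · intro hh; exact h1 ⟨hh.1, hh.2.1⟩
    · intro p _ hp
      by_cases h1 : c 0 = j ∧ E c ∧ p.1 = embA ∘ c ∧ p.2 = embA ∘ c
      · exact absurd (Prod.ext h1.2.2.1 h1.2.2.2) hp
      · rw [if_neg h1, zero_mul]
    · intro h; exact absurd (Finset.mem_univ _) h
  -- collapse c'
  have hkey2 : ∀ c : Fin (r+1) → Fin N,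
      (∑ c' : Fin (r+1) → Fin N,
        if c 0 = j ∧ E c ∧ c' 0 = k ∧ E c' ∧ c' = (fun i => c i.rev) then
          (starRingEnd ℂ) (sq ((starRingEnd ℂ) (v c))) * sq ((starRingEnd ℂ) (v c')) else 0)
      = if c 0 = j ∧ c (Fin.last r) = k ∧ E c then v c else 0 := by
    intro c
    rw [Finset.sum_eq_single (fun i : Fin (r+1) => c i.rev)]
    · have h0 : (fun i : Fin (r+1) => c i.rev) 0 = c (Fin.last r) := by
        simp [Fin.rev_zero]
      by_cases h1 : c 0 = j ∧ c (Fin.last r) = k ∧ E c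
      · rw [if_pos ⟨h1.1, h1.2.2, h0.trans h1.2.1, (hrevE c).mpr h1.2.2, rfl⟩, if_pos h1]
        rw [hrevProd c, starRingEnd_self_apply]
        exact hz c
      · rw [if_neg, if_neg h1]
        intro hh
        exact h1 ⟨hh.1, h0.symm.trans hh.2.2.1, hh.2.1⟩
    · intro c'' _ hne
      rw [if_neg]
      intro hh
      exact hne hh.2.2.2.2
    · intro h; exact absurd (Finset.mem_univ _) h
  -- pointwise expansion of the inner product
  have e1 : ∀ p : (Fin (r + 1) → Fin (2 * N)) × (Fin (r + 1) → Fin (2 * N)),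
      (starRingEnd ℂ) (PhiPar d r H sq j p) * revOp (PhiPar d r H sq k) p
      = C * C * ∑ c : Fin (r+1) → Fin N, ∑ c' : Fin (r+1) → Fin N,
        (if c 0 = j ∧ E c ∧ p.1 = embA ∘ c ∧ p.2 = embA ∘ c then
            (starRingEnd ℂ) (sq ((starRingEnd ℂ) (v c))) else 0) *
        (if c' 0 = k ∧ E c' ∧ (fun i => p.2 i.rev) = embA ∘ c' ∧
            (fun i => p.1 i.rev) = embA ∘ c' then sq ((starRingEnd ℂ) (v c')) else 0) := by
    intro p
    simp only [PhiPar, revOp, ← hC, ← hv, ← hE]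
    rw [map_mul, hCconj, map_sum, mul_mul_mul_comm, Finset.sum_mul_sum]
    congr 1
    refine Finset.sum_congr rfl fun c _ => Finset.sum_congr rfl fun c' _ => ?_
    congr 1
    rw [apply_ite (starRingEnd ℂ), map_zero]
  have hmain : innerPar (PhiPar d r H sq j) (revOp (PhiPar d r H sq k))
      = C * C * ∑ c : Fin (r+1) → Fin N,
          if c 0 = j ∧ c (Fin.last r) = k ∧ E c then v c else 0 := by
    rw [innerPar]
    rw [Finset.sum_congr rfl fun p _ => e1 p, ← Finset.mul_sum]
    congr 1
    rw [Finset.sum_comm]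
    refine Finset.sum_congr rfl fun c _ => ?_
    calc (∑ p : (Fin (r + 1) → Fin (2 * N)) × (Fin (r + 1) → Fin (2 * N)),
            ∑ c' : Fin (r+1) → Fin N, _) = _ := Finset.sum_comm
      _ = _ := Finset.sum_congr rfl fun c' _ => hkey c c'
      _ = _ := hkey2 c
  rw [hmain]
  have hCC : C * C = ((d : ℂ)⁻¹) ^ r := by
    rw [hC, ← mul_inv, ← Complex.ofReal_mul, Real.mul_self_sqrt (by positivity)]
    push_cast
    rw [inv_pow]
  rw [hCC, smul_pow, Matrix.smul_apply, smul_eq_mul, pow_entry]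
  congr 1
  refine Finset.sum_congr rfl fun c _ => ?_
  by_cases hEc : E c
  · by_cases hjk : c 0 = j ∧ c (Fin.last r) = k
    · rw [if_pos ⟨hjk.1, hjk.2, hEc⟩, if_pos hjk]
    · rw [if_neg, if_neg hjk]
      intro hh; exact hjk ⟨hh.1, hh.2.1⟩
  · have hEc' : ∃ s : Fin r, H (c s.castSucc) (c s.succ) = 0 := by
      by_contra hcon
      push_neg at hcon
      exact hEc hcon
    obtain ⟨s, hs⟩ := hEc'
    have hv0 : (∏ s : Fin r, H (c s.castSucc) (c s.succ)) = 0 :=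
      Finset.prod_eq_zero (Finset.mem_univ s) hs
    by_cases hjk : c 0 = j ∧ c (Fin.last r) = k
    · rw [if_pos hjk, if_neg, hv0]
      intro hh; exact hEc hh.2.2
    · rw [if_neg, if_neg hjk]
      intro hh; exact hjk ⟨hh.1, hh.2.1⟩


end
end
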